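/- In a k-connected graph G with nonadjacent vertices s, t of degree > k: if s lies in a small tight set with minimal small tight set R_s, and t ∉ R_s ∪ ∂R_s, then ∂R_s is a minimum s–t vertex cut (of size k), i.e., κ(s,t) = k and ∂R_s separates s from t. -/

import Mathlib

open Set

variable {V : Type*} [Fintype V] [DecidableEq V]

/-- The boundary (neighborhood) of a vertex set: vertices outside `A` adjacent to `A`. -/
def bdry (G : SimpleGraph V) (A : Set V) : Set V := {v | v ∉ A ∧ ∃ a ∈ A, G.Adj a v}

/-- The "node complement" `A* = V \ (A ∪ ∂A)`. -/
def nstar (G : SimpleGraph V) (A : Set V) : Set V := (A ∪ bdry G A)ᶜ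

/-- `C` is a vertex set separating `s` from `t`. -/
def IsSep (G : SimpleGraph V) (s t : V) (C : Set V) : Prop :=
  s ∉ C ∧ t ∉ C ∧ ∀ p : G.Walk s t, ∃ v ∈ C, v ∈ p.support

/-- `κ(s,t)`: minimum size of an `s`–`t` vertex cut. -/
noncomputable def kappa (G : SimpleGraph V) (s t : V) : ℕ :=
  sInf {n | ∃ C : Set V, C.ncard = n ∧ IsSep G s t C}

/-- A set is tight if `|∂A| = k` and `A* ≠ ∅`. -/
def Tight (G : SimpleGraph V) (k : ℕ) (A : Set V) : Prop :=
  (bdry G A).ncard = k ∧ (nstar G A).Nonempty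

/-- A set is small if `|A| ≤ (n - k)/2`. -/
def SmallSet (k : ℕ) (A : Set V) : Prop := 2 * A.ncard + k ≤ Fintype.card V

/-- `G` is `k`-connected. -/
def KConn (G : SimpleGraph V) (k : ℕ) : Prop :=
  k + 1 ≤ Fintype.card V ∧
    ∀ s t : V, s ≠ t → ∀ C : Set V, IsSep G s t C → k ≤ C.ncard

/-- degree of a vertex -/
noncomputable def deg (G : SimpleGraph V) (v : V) : ℕ := (G.neighborSet v).ncard

/-- `X` is an `st`-tight set: `s ∈ X`, `t ∈ X*` and `|∂X| = κ(s,t)`. -/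
def TightST (G : SimpleGraph V) (s t : V) (X : Set V) : Prop :=
  s ∈ X ∧ t ∈ nstar G X ∧ (bdry G X).ncard = kappa G s t

/-- `R_s`: intersection of all small tight sets containing `s`. -/
def Rmin (G : SimpleGraph V) (k : ℕ) (s : V) : Set V :=
  ⋂₀ {A : Set V | Tight G k A ∧ SmallSet k A ∧ s ∈ A}

/-- Two sets are laminar if disjoint or one contains the other. -/
def Laminar (X Y : Set V) : Prop := Disjoint X Y ∨ X ⊆ Y ∨ Y ⊆ X

/-- `d`-degeneracy: every nonempty vertex subset has a vertex with at most `d`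
neighbors inside it. -/
def Degenerate (G : SimpleGraph V) (d : ℕ) : Prop :=
  ∀ W : Set V, W.Nonempty → ∃ v ∈ W, (G.neighborSet v ∩ W).ncard ≤ d

/-- The set of vertices reachable from `s` avoiding `C`. -/
def Reach (G : SimpleGraph V) (C : Set V) (s : V) : Set V :=
  {v | ∃ p : G.Walk s v, ∀ u ∈ p.support, u ∉ C}

/-! Any two small tight sets containing `s` meet in a small tight set: by submodularity of
`|∂·|`, `|∂(X ∩ Y)| + |∂(X ∪ Y)| ≤ 2k`, and both terms are at least `k`, the second one because
either `(X ∪ Y)*` is nonempty or `∂(X ∪ Y)` is everything outside `X ∪ Y`, which is large since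
`X` and `Y` are small and overlap. Hence `R_s` is itself a small tight set, so its boundary is an
`s`–`t` separator of size `k`, and `k`-connectivity forbids smaller ones. -/

section General

omit [Fintype V] [DecidableEq V]

variable {G : SimpleGraph V} {A B C : Set V} {s t : V}

lemma exists_mem_bdry_mem_support {x y : V} (p : G.Walk x y) (hx : x ∈ A) (hy : y ∉ A) :
    ∃ v ∈ bdry G A, v ∈ p.support := by
  induction p with
  | nil => exact absurd hx hy
  | @cons u v w huv q ih =>
    by_cases hv : v ∈ A
    · obtain ⟨z, hz, hzq⟩ := ih hv hy
      exact ⟨z, hz, List.mem_cons_of_mem _ hzq⟩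
    · exact ⟨v, ⟨hv, u, hx, huv⟩, by simp⟩

lemma isSep_bdry (hs : s ∈ A) (ht : t ∈ nstar G A) : IsSep G s t (bdry G A) := by
  have ht' : t ∉ A ∧ t ∉ bdry G A := by simpa [nstar, not_or] using ht
  exact ⟨fun h => h.1 hs, ht'.2, fun p => exists_mem_bdry_mem_support p hs ht'.1⟩

lemma IsSep.ne (h : IsSep G s t C) : s ≠ t := by
  rintro rfl
  obtain ⟨v, hv, hvs⟩ := h.2.2 .nil
  rw [SimpleGraph.Walk.support_nil, List.mem_singleton] at hvs
  exact h.1 (hvs ▸ hv)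

lemma nstar_anti (h : A ⊆ B) : nstar G B ⊆ nstar G A := by
  refine compl_subset_compl.2 ?_
  rintro v (hv | ⟨-, a, ha, hav⟩)
  · exact Or.inl (h hv)
  · by_cases hvB : v ∈ B
    · exact Or.inl hvB
    · exact Or.inr ⟨hvB, a, h ha, hav⟩

end General

section Finite

omit [DecidableEq V]

variable {G : SimpleGraph V} {k : ℕ} {A X Y C : Set V} {s t : V}

lemma ncard_bdry_inter_add_ncard_bdry_union_le (G : SimpleGraph V) (X Y : Set V) :
    (bdry G (X ∩ Y)).ncard + (bdry G (X ∪ Y)).ncard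
      ≤ (bdry G X).ncard + (bdry G Y).ncard := by
  have hunion : bdry G (X ∩ Y) ∪ bdry G (X ∪ Y) ⊆ bdry G X ∪ bdry G Y := by
    rintro v (⟨hv, a, ⟨haX, haY⟩, hav⟩ | ⟨hv, a, haX | haY, hav⟩)
    · by_cases hX : v ∈ X
      · exact Or.inr ⟨fun hY => hv ⟨hX, hY⟩, a, haY, hav⟩
      · exact Or.inl ⟨hX, a, haX, hav⟩
    · exact Or.inl ⟨fun h => hv (Or.inl h), a, haX, hav⟩
    · exact Or.inr ⟨fun h => hv (Or.inr h), a, haY, hav⟩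
  have hinter : bdry G (X ∩ Y) ∩ bdry G (X ∪ Y) ⊆ bdry G X ∩ bdry G Y := by
    rintro v ⟨⟨-, a, ⟨haX, haY⟩, hav⟩, hv, -⟩
    exact ⟨⟨fun h => hv (Or.inl h), a, haX, hav⟩, ⟨fun h => hv (Or.inr h), a, haY, hav⟩⟩
  calc (bdry G (X ∩ Y)).ncard + (bdry G (X ∪ Y)).ncard
      = (bdry G (X ∩ Y) ∪ bdry G (X ∪ Y)).ncard
          + (bdry G (X ∩ Y) ∩ bdry G (X ∪ Y)).ncard := (ncard_union_add_ncard_inter _ _).symm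
    _ ≤ (bdry G X ∪ bdry G Y).ncard + (bdry G X ∩ bdry G Y).ncard :=
        add_le_add (ncard_le_ncard hunion) (ncard_le_ncard hinter)
    _ = (bdry G X).ncard + (bdry G Y).ncard := ncard_union_add_ncard_inter _ _

lemma ncard_add_ncard_bdry_of_nstar_eq_empty (h : nstar G A = ∅) :
    A.ncard + (bdry G A).ncard = Fintype.card V := by
  have hdisj : Disjoint A (bdry G A) := disjoint_left.2 fun _ hv hv' => hv'.1 hv
  rw [← ncard_union_eq hdisj, compl_empty_iff.1 h, ncard_univ, Nat.card_eq_fintype_card]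

lemma SmallSet.mono (hX : SmallSet k X) (h : Y ⊆ X) : SmallSet k Y := by
  have := ncard_le_ncard h
  unfold SmallSet at *
  omega

lemma KConn.le_ncard_bdry (hG : KConn G k) (hs : s ∈ A) (hA : (nstar G A).Nonempty) :
    k ≤ (bdry G A).ncard := by
  obtain ⟨t, ht⟩ := hA
  have hsep := isSep_bdry hs ht
  exact hG.2 s t hsep.ne _ hsep

lemma KConn.le_ncard_bdry_union (hG : KConn G k) (hX : SmallSet k X) (hY : SmallSet k Y)
    (hXY : (X ∩ Y).Nonempty) : k ≤ (bdry G (X ∪ Y)).ncard := by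
  rcases eq_empty_or_nonempty (nstar G (X ∪ Y)) with hempty | hne
  · have hcard := ncard_add_ncard_bdry_of_nstar_eq_empty hempty
    have hsum := ncard_union_add_ncard_inter X Y
    have hpos := (ncard_pos (s := X ∩ Y)).2 hXY
    unfold SmallSet at hX hY
    omega
  · obtain ⟨s, hsX, -⟩ := hXY
    exact hG.le_ncard_bdry (Or.inl hsX) hne

lemma Tight.inter (hG : KConn G k) (hX : Tight G k X) (hY : Tight G k Y)
    (hXs : SmallSet k X) (hYs : SmallSet k Y) (hs : s ∈ X ∩ Y) : Tight G k (X ∩ Y) := by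
  have hne : (nstar G (X ∩ Y)).Nonempty := hX.2.mono (nstar_anti inter_subset_left)
  have hunion := hG.le_ncard_bdry_union (G := G) hXs hYs ⟨s, hs⟩
  have hsub := ncard_bdry_inter_add_ncard_bdry_union_le G X Y
  have hge := hG.le_ncard_bdry hs hne
  refine ⟨?_, hne⟩
  rw [hX.1, hY.1] at hsub
  omega

lemma kappa_eq_of_isSep (hG : KConn G k) (hC : IsSep G s t C) (hCk : C.ncard = k) :
    kappa G s t = k := by
  have hmem : k ∈ {n | ∃ C : Set V, C.ncard = n ∧ IsSep G s t C} := ⟨C, hCk, hC⟩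
  obtain ⟨D, hD, hDsep⟩ := Nat.sInf_mem ⟨k, hmem⟩
  refine le_antisymm (Nat.sInf_le hmem) ?_
  rw [kappa, ← hD]
  exact hG.2 s t hDsep.ne D hDsep

lemma Rmin_mem (hG : KConn G k) (hs : ∃ A : Set V, Tight G k A ∧ SmallSet k A ∧ s ∈ A) :
    Rmin G k s ∈ {A : Set V | Tight G k A ∧ SmallSet k A ∧ s ∈ A} :=
  InfClosed.sInf_mem_of_nonempty
    (fun _ ⟨hX, hXs, hsX⟩ _ ⟨hY, hYs, hsY⟩ =>
      ⟨hX.inter hG hY hXs hYs ⟨hsX, hsY⟩, hXs.mono inter_subset_left, hsX, hsY⟩)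
    (toFinite _) hs subset_rfl

end Finite

theorem stmt19_general (G : SimpleGraph V) (k : ℕ) (s t : V) (hG : KConn G k)
    (hs : ∃ A : Set V, Tight G k A ∧ SmallSet k A ∧ s ∈ A)
    (ht : t ∉ Rmin G k s ∪ bdry G (Rmin G k s)) :
    kappa G s t = k ∧ IsSep G s t (bdry G (Rmin G k s)) := by
  obtain ⟨⟨hRk, -⟩, -, hsR⟩ := Rmin_mem hG hs
  have hsep : IsSep G s t (bdry G (Rmin G k s)) := isSep_bdry hsR ht
  exact ⟨kappa_eq_of_isSep hG hsep hRk, hsep⟩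

theorem stmt19 (G : SimpleGraph V) (k : ℕ) (s t : V) (hG : KConn G k)
    (hst : ¬ G.Adj s t) (hne : s ≠ t) (hds : k < deg G s) (hdt : k < deg G t)
    (hs : ∃ A : Set V, Tight G k A ∧ SmallSet k A ∧ s ∈ A)
    (ht : t ∉ Rmin G k s ∪ bdry G (Rmin G k s)) :
    kappa G s t = k ∧ IsSep G s t (bdry G (Rmin G k s)) :=
  stmt19_general G k s t hG hs ht
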